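/- For all real 3 ≤ P ≤ R, Σ_{R < m ≤ RP, m P-smooth} τ(m)/m ≤ R^{−1/log P} Σ_{m P-smooth} τ(m)/m^{1 − 1/log P} ≪ R^{−1/log P} log² P, with an absolute implied constant, where m runs over P-smooth natural numbers and τ(m) is the number of divisors of m. -/

import Mathlib

open scoped Classical

/-- `τ(n)`: the number of divisors of `n`. -/
def tau (n : ℕ) : ℕ := n.divisors.card

/-!
Write `δ = 1 / log P`. For `m > R` we have `1 / m ≤ R ^ (-δ) / m ^ (1 - δ)`, which gives the first
inequality (Rankin's trick). The series over `P`-smooth `m` is the Euler product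
`∏_{p ≤ P} (1 - p ^ (-(1 - δ)))⁻²`. Each factor `(1 - p ^ (-(1 - δ)))⁻¹` exceeds
`(1 - p ^ (-(1 + δ)))⁻¹` by at most a factor `exp (O (δ log p / p))`. The factors
`(1 - p ^ (-(1 + δ)))⁻¹` multiply to at most `ζ(1 + δ) ≤ 1 + log P`, and the correction factors
to `O(1)` by Chebyshev's estimate `∑_{p ≤ P} log p / p ≤ log P + O(1)`.
-/

open Finset Real
open scoped Nat

lemma tau_mul_of_coprime {m n : ℕ} (h : m.Coprime n) : tau (m * n) = tau m * tau n :=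
  Nat.Coprime.card_divisors_mul h

lemma tau_prime_pow {p : ℕ} (hp : p.Prime) (e : ℕ) : tau (p ^ e) = e + 1 := by
  simp [tau, Nat.divisors_prime_pow hp]

lemma tau_div_rpow_mul_of_coprime (σ : ℝ) {m n : ℕ} (h : m.Coprime n) :
    (tau (m * n) : ℝ) / ((m * n : ℕ) : ℝ) ^ σ
      = (tau m : ℝ) / (m : ℝ) ^ σ * ((tau n : ℝ) / (n : ℝ) ^ σ) := by
  rw [tau_mul_of_coprime h, Nat.cast_mul, Nat.cast_mul,
    mul_rpow (Nat.cast_nonneg m) (Nat.cast_nonneg n), mul_div_mul_comm]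

lemma hasSum_tau_prime_pow_div_rpow {σ : ℝ} (hσ : 0 < σ) {p : ℕ} (hp : p.Prime) :
    HasSum (fun e : ℕ ↦ (tau (p ^ e) : ℝ) / ((p ^ e : ℕ) : ℝ) ^ σ)
      ((1 - (p : ℝ) ^ (-σ))⁻¹ ^ 2) := by
  have hp0 : (0 : ℝ) < p := by exact_mod_cast hp.pos
  have hy : ‖(p : ℝ) ^ (-σ)‖ < 1 := by
    rw [norm_of_nonneg (rpow_nonneg hp0.le _)]
    exact rpow_lt_one_of_one_lt_of_neg (by exact_mod_cast hp.one_lt) (neg_neg_of_pos hσ)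
  have h := hasSum_choose_mul_geometric_of_norm_lt_one 1 hy
  rw [one_add_one_eq_two, one_div, ← inv_pow] at h
  refine h.congr_fun fun e ↦ ?_
  rw [tau_prime_pow hp, Nat.choose_one_right, Nat.cast_pow, ← rpow_natCast, ← rpow_natCast,
    ← rpow_mul hp0.le, ← rpow_mul hp0.le, div_eq_mul_inv, ← rpow_neg hp0.le]
  push_cast
  ring_nf

theorem hasSum_tau_div_rpow_smoothNumbers {σ : ℝ} (hσ : 0 < σ) (N : ℕ) :
    HasSum (fun m : N.smoothNumbers ↦ (tau m : ℝ) / (m : ℝ) ^ σ)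
      ((∏ p ∈ N.primesBelow, (1 - (p : ℝ) ^ (-σ))⁻¹) ^ 2) := by
  have h := (EulerProduct.summable_and_hasSum_smoothNumbers_prod_primesBelow_tsum
    (f := fun m ↦ (tau m : ℝ) / (m : ℝ) ^ σ) (by simp [tau])
    (tau_div_rpow_mul_of_coprime σ)
    (fun hp ↦ (hasSum_tau_prime_pow_div_rpow hσ hp).summable.norm) N).2
  rwa [prod_congr rfl fun p hp ↦
    (hasSum_tau_prime_pow_div_rpow hσ (Nat.prime_of_mem_primesBelow hp)).tsum_eq, prod_pow] at h

noncomputable def natRpowHom (s : ℝ) : ℕ →* ℝ where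
  toFun n := (n : ℝ) ^ s
  map_one' := by simp
  map_mul' m n := by push_cast; exact mul_rpow (Nat.cast_nonneg m) (Nat.cast_nonneg n)

lemma tsum_nat_rpow_neg_le {s : ℝ} (hs : 1 < s) :
    ∑' n : ℕ, (n : ℝ) ^ (-s) ≤ 1 + 1 / (s - 1) := by
  have hsum : Summable fun n : ℕ ↦ (n : ℝ) ^ (-s) := summable_nat_rpow.mpr (by linarith)
  -- `termTSum s` is the (nonnegative) error in comparing the series with `∫₁^∞ x ^ (-s) dx`.
  have h := ZetaAsymptotics.zeta_limit_aux1 hs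
  have hT : 0 ≤ ZetaAsymptotics.termTSum s :=
    tsum_nonneg fun n ↦ ZetaAsymptotics.term_nonneg (n + 1) s
  rw [hsum.tsum_eq_zero_add, Nat.cast_zero, zero_rpow (by linarith), zero_add]
  have : ∑' n : ℕ, ((n + 1 : ℕ) : ℝ) ^ (-s) = ∑' n : ℕ, 1 / ((n : ℝ) + 1) ^ s := by
    congr 1 with n
    rw [rpow_neg (Nat.cast_nonneg _), one_div, Nat.cast_add_one]
  rw [this]
  nlinarith

lemma prod_primesBelow_inv_one_sub_rpow_neg_le {s : ℝ} (hs : 1 < s) (N : ℕ) :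
    ∏ p ∈ N.primesBelow, (1 - (p : ℝ) ^ (-s))⁻¹ ≤ 1 + 1 / (s - 1) := by
  have hsum : Summable (natRpowHom (-s)) := summable_nat_rpow.mpr (by linarith)
  calc ∏ p ∈ N.primesBelow, (1 - (p : ℝ) ^ (-s))⁻¹
      = ∑' m : N.smoothNumbers, natRpowHom (-s) m :=
        EulerProduct.prod_primesBelow_geometric_eq_tsum_smoothNumbers hsum N
    _ ≤ ∑' n : ℕ, natRpowHom (-s) n :=
        hsum.tsum_subtype_le _ _ fun n ↦ rpow_nonneg (Nat.cast_nonneg n) (-s)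
    _ ≤ 1 + 1 / (s - 1) := tsum_nat_rpow_neg_le hs

lemma Nat.div_le_factorization_factorial {p : ℕ} (hp : p.Prime) (N : ℕ) :
    N / p ≤ (N !).factorization p := by
  rw [Nat.factorization_factorial hp (Nat.lt_add_of_pos_right (n := Nat.log p N) two_pos)]
  simpa using single_le_sum (f := fun i ↦ N / p ^ i) (fun _ _ ↦ Nat.zero_le _)
    (by simp : 1 ∈ Ico 1 (Nat.log p N + 2))

lemma sum_primesBelow_div_mul_log_le_log_factorial (N : ℕ) :
    ∑ p ∈ N.primesBelow, ((N / p : ℕ) : ℝ) * log p ≤ log (N ! : ℕ) := by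
  have hsub : N.primesBelow ⊆ (N !).primeFactors := fun p hp ↦ by
    have hp' := Nat.prime_of_mem_primesBelow hp
    exact Nat.mem_primeFactors.mpr
      ⟨hp', Nat.dvd_factorial hp'.pos (Nat.lt_of_mem_primesBelow hp).le, Nat.factorial_ne_zero N⟩
  rw [log_nat_eq_sum_factorization, Finsupp.sum, Nat.support_factorization]
  calc ∑ p ∈ N.primesBelow, ((N / p : ℕ) : ℝ) * log p
      ≤ ∑ p ∈ N.primesBelow, ((N !).factorization p : ℝ) * log p := sum_le_sum fun p hp ↦ by
        gcongr
        exact Nat.div_le_factorization_factorial (Nat.prime_of_mem_primesBelow hp) N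
    _ ≤ ∑ p ∈ (N !).primeFactors, ((N !).factorization p : ℝ) * log p :=
        sum_le_sum_of_subset_of_nonneg hsub fun p _ _ ↦ by positivity

lemma sum_primesBelow_log_le (N : ℕ) : ∑ p ∈ N.primesBelow, log p ≤ log 4 * N := by
  calc ∑ p ∈ N.primesBelow, log p ≤ ∑ p ∈ Nat.primesLE N, log p :=
        sum_le_sum_of_subset_of_nonneg (Nat.primesBelow_mono (Nat.le_succ N))
          fun p _ _ ↦ log_natCast_nonneg p
    _ = Chebyshev.theta N := (Chebyshev.theta_eq_sum_primesLE_log N).symm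
    _ ≤ log 4 * N := Chebyshev.theta_le_log4_mul_x (Nat.cast_nonneg N)

theorem sum_primesBelow_log_div_le (N : ℕ) :
    ∑ p ∈ N.primesBelow, log p / p ≤ log N + log 4 := by
  rcases N.eq_zero_or_pos with rfl | hN
  · simp [Nat.primesBelow_zero, log_nonneg]
  have hN' : (0 : ℝ) < N := by exact_mod_cast hN
  rw [← mul_le_mul_iff_of_pos_left hN', mul_sum]
  calc ∑ p ∈ N.primesBelow, (N : ℝ) * (log p / p)
      ≤ ∑ p ∈ N.primesBelow, (((N / p : ℕ) : ℝ) * log p + log p) := sum_le_sum fun p hp ↦ by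
        have hlog : 0 ≤ log p := log_natCast_nonneg p
        have hfloor : (N : ℝ) / p ≤ (N / p : ℕ) + 1 := by
          rw [← Nat.floor_div_eq_div (K := ℝ)]
          exact (Nat.lt_floor_add_one _).le
        calc (N : ℝ) * (log p / p) = N / p * log p := by ring
          _ ≤ ((N / p : ℕ) + 1) * log p := by gcongr
          _ = _ := by ring
    _ ≤ N * log N + log 4 * N := by
        rw [sum_add_distrib]
        gcongr
        · calc _ ≤ log (N ! : ℕ) := sum_primesBelow_div_mul_log_le_log_factorial N
            _ ≤ log ((N ^ N : ℕ) : ℝ) :=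
                log_le_log (by positivity) (by exact_mod_cast N.factorial_le_pow)
            _ = N * log N := by rw [Nat.cast_pow, log_pow]
        · exact sum_primesBelow_log_le N
    _ = N * (log N + log 4) := by ring

lemma exp_sub_exp_neg_le {t : ℝ} (h0 : 0 ≤ t) (h1 : t ≤ 1) :
    exp t - exp (-t) ≤ 2 * exp 1 * t := by
  have hsplit : exp t - exp (-t) = exp t * (1 - exp (-(2 * t))) := by
    rw [mul_sub, mul_one, ← exp_add]; ring_nf
  have h2t : 1 - exp (-(2 * t)) ≤ 2 * t := by linarith [add_one_le_exp (-(2 * t))]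
  have hexp : exp t ≤ exp 1 := exp_le_exp.mpr h1
  rw [hsplit]
  nlinarith [exp_pos t, exp_pos (-(2 * t))]

lemma rpow_neg_one_sub_sub_rpow_neg_one_add_le {x δ : ℝ} (hx : 1 ≤ x) (hδ : 0 ≤ δ)
    (hδx : δ * log x ≤ 1) :
    x ^ (-(1 - δ)) - x ^ (-(1 + δ)) ≤ 2 * exp 1 * δ * (log x / x) := by
  have hx0 : 0 < x := by linarith
  have hlog : 0 ≤ log x := log_nonneg hx
  have h := exp_sub_exp_neg_le (mul_nonneg hδ hlog) hδx
  have hsplit : x ^ (-(1 - δ)) - x ^ (-(1 + δ)) = (exp (δ * log x) - exp (-(δ * log x))) / x := by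
    rw [rpow_def_of_pos hx0, rpow_def_of_pos hx0, sub_div, ← exp_log hx0, ← exp_sub, ← exp_sub,
      exp_log hx0]
    ring_nf
  rw [hsplit, div_le_iff₀ hx0]
  calc _ ≤ 2 * exp 1 * (δ * log x) := h
    _ = _ := by field_simp

lemma inv_one_sub_le_mul_exp {x y η : ℝ} (hyx : y ≤ x) (hxη : x ≤ η) (hη : η < 1) :
    (1 - x)⁻¹ ≤ (1 - y)⁻¹ * exp ((x - y) / (1 - η)) := by
  have hx1 : 0 < 1 - x := by linarith
  have hy1 : 0 < 1 - y := by linarith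
  calc (1 - x)⁻¹ = (1 - y)⁻¹ * (1 + (x - y) / (1 - x)) := by field_simp; ring
    _ ≤ (1 - y)⁻¹ * (1 + (x - y) / (1 - η)) := by gcongr
    _ ≤ (1 - y)⁻¹ * exp ((x - y) / (1 - η)) := by
        gcongr
        rw [add_comm]
        exact add_one_le_exp _

lemma natCast_rpow_neg_le_one (p : ℕ) {σ : ℝ} (hσ : 0 ≤ σ) : (p : ℝ) ^ (-σ) ≤ 1 := by
  rcases p.eq_zero_or_pos with rfl | hp
  · exact_mod_cast zero_rpow_le_one (-σ)
  · exact rpow_le_one_of_one_le_of_nonpos (by exact_mod_cast hp) (neg_nonpos.mpr hσ)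

lemma inv_one_sub_prime_rpow_le_mul_exp {p : ℕ} (hp : p.Prime) {δ δ₀ : ℝ} (hδ : 0 ≤ δ)
    (hδδ₀ : δ ≤ δ₀) (hδ₀ : δ₀ < 1) (hδp : δ * log p ≤ 1) :
    (1 - (p : ℝ) ^ (-(1 - δ)))⁻¹ ≤ (1 - (p : ℝ) ^ (-(1 + δ)))⁻¹ *
      exp (2 * exp 1 / (1 - (2 : ℝ) ^ (-(1 - δ₀))) * δ * (log p / p)) := by
  have hp1 : (1 : ℝ) ≤ p := by exact_mod_cast hp.one_lt.le
  have hp2 : (2 : ℝ) ≤ p := by exact_mod_cast hp.two_le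
  have hη : (2 : ℝ) ^ (-(1 - δ₀)) < 1 := rpow_lt_one_of_one_lt_of_neg one_lt_two (by linarith)
  have hyx : (p : ℝ) ^ (-(1 + δ)) ≤ (p : ℝ) ^ (-(1 - δ)) :=
    rpow_le_rpow_of_exponent_le hp1 (by linarith)
  have hxη : (p : ℝ) ^ (-(1 - δ)) ≤ (2 : ℝ) ^ (-(1 - δ₀)) :=
    calc (p : ℝ) ^ (-(1 - δ)) ≤ (2 : ℝ) ^ (-(1 - δ)) :=
          rpow_le_rpow_of_nonpos two_pos hp2 (by linarith)
      _ ≤ (2 : ℝ) ^ (-(1 - δ₀)) := rpow_le_rpow_of_exponent_le one_le_two (by linarith)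
  refine (inv_one_sub_le_mul_exp hyx hxη hη).trans ?_
  gcongr _ * exp ?_
  · exact inv_nonneg.mpr (by linarith)
  exact (div_le_div_of_nonneg_right (rpow_neg_one_sub_sub_rpow_neg_one_add_le hp1 hδ hδp)
    (by linarith)).trans_eq (by ring)

lemma sum_primesBelow_floor_log_div_le {P : ℝ} (hP : 1 ≤ P) :
    ∑ p ∈ (⌊P⌋₊ + 1).primesBelow, log p / p ≤ log P + log 8 := by
  have hN : ((⌊P⌋₊ + 1 : ℕ) : ℝ) ≤ 2 * P := by
    push_cast
    linarith [Nat.floor_le (zero_le_one.trans hP)]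
  calc _ ≤ log ((⌊P⌋₊ + 1 : ℕ) : ℝ) + log 4 := sum_primesBelow_log_div_le _
    _ ≤ log (2 * P) + log 4 := by gcongr
    _ = log P + log 8 := by
        rw [log_mul two_ne_zero (by positivity), show (8 : ℝ) = 2 * 4 by norm_num,
          log_mul two_ne_zero four_ne_zero]
        ring

lemma one_lt_log_of_three_le {P : ℝ} (hP : 3 ≤ P) : 1 < log P :=
  (lt_log_iff_exp_lt (by linarith)).mpr (exp_one_lt_three.trans_le hP)

lemma prod_primesBelow_inv_one_sub_rpow_le_mul_exp {N : ℕ} {δ δ₀ : ℝ} (hδ : 0 < δ)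
    (hδδ₀ : δ ≤ δ₀) (hδ₀ : δ₀ < 1) (hN : ∀ p ∈ N.primesBelow, δ * log p ≤ 1) :
    ∏ p ∈ N.primesBelow, (1 - (p : ℝ) ^ (-(1 - δ)))⁻¹ ≤ (1 + 1 / δ) *
      exp (2 * exp 1 / (1 - (2 : ℝ) ^ (-(1 - δ₀))) * δ * ∑ p ∈ N.primesBelow, log p / p) := by
  set c := 2 * exp 1 / (1 - (2 : ℝ) ^ (-(1 - δ₀)))
  calc ∏ p ∈ N.primesBelow, (1 - (p : ℝ) ^ (-(1 - δ)))⁻¹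
      ≤ ∏ p ∈ N.primesBelow, (1 - (p : ℝ) ^ (-(1 + δ)))⁻¹ * exp (c * δ * (log p / p)) :=
        prod_le_prod (fun p _ ↦ inv_nonneg.mpr (sub_nonneg.mpr
          (natCast_rpow_neg_le_one p (by linarith)))) fun p hp ↦
          inv_one_sub_prime_rpow_le_mul_exp (Nat.prime_of_mem_primesBelow hp) hδ.le hδδ₀ hδ₀
            (hN p hp)
    _ = (∏ p ∈ N.primesBelow, (1 - (p : ℝ) ^ (-(1 + δ)))⁻¹) *
          exp (c * δ * ∑ p ∈ N.primesBelow, log p / p) := by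
        rw [prod_mul_distrib, ← exp_sum, mul_sum]
    _ ≤ (1 + 1 / δ) * exp (c * δ * ∑ p ∈ N.primesBelow, log p / p) := by
        gcongr
        simpa using prod_primesBelow_inv_one_sub_rpow_neg_le (s := 1 + δ) (by linarith) N

theorem prod_primesBelow_inv_one_sub_rpow_le_mul_log :
    ∃ C, 0 < C ∧ ∀ P : ℝ, 3 ≤ P →
      ∏ p ∈ (⌊P⌋₊ + 1).primesBelow, (1 - (p : ℝ) ^ (-(1 - 1 / log P)))⁻¹ ≤ C * log P := by
  have hδ₀ : 1 / log 3 < 1 := (div_lt_one (by positivity)).mpr (one_lt_log_of_three_le le_rfl)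
  set c := 2 * exp 1 / (1 - (2 : ℝ) ^ (-(1 - 1 / log 3)))
  have hc : 0 ≤ c := div_nonneg (by positivity)
    (sub_nonneg.mpr (rpow_le_one_of_one_le_of_nonpos one_le_two (by linarith)))
  refine ⟨2 * exp (c * (1 + log 8)), by positivity, fun P hP ↦ ?_⟩
  have hlogP := one_lt_log_of_three_le hP
  set δ := 1 / log P
  have hδ : 0 < δ := by positivity
  have hδδ₀ : δ ≤ 1 / log 3 :=
    one_div_le_one_div_of_le (by positivity) (log_le_log (by norm_num) hP)
  have hδlogP : δ * log P = 1 := one_div_mul_cancel (by positivity)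
  have hlogp : ∀ p ∈ (⌊P⌋₊ + 1).primesBelow, δ * log p ≤ 1 := fun p hp ↦ by
    have hpP : (p : ℝ) ≤ P :=
      (Nat.le_floor_iff (by linarith)).mp (Nat.lt_add_one_iff.mp (Nat.lt_of_mem_primesBelow hp))
    rw [← hδlogP]
    gcongr
    exact_mod_cast (Nat.prime_of_mem_primesBelow hp).pos
  have hsum : δ * ∑ p ∈ (⌊P⌋₊ + 1).primesBelow, log p / p ≤ 1 + log 8 :=
    calc δ * ∑ p ∈ (⌊P⌋₊ + 1).primesBelow, log p / p ≤ δ * (log P + log 8) := by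
          gcongr
          exact sum_primesBelow_floor_log_div_le (by linarith)
      _ ≤ 1 + log 8 := by
          rw [mul_add, hδlogP]
          gcongr
          nlinarith [log_nonneg (by norm_num : (1 : ℝ) ≤ 8)]
  calc _ ≤ (1 + 1 / δ) * exp (c * δ * ∑ p ∈ (⌊P⌋₊ + 1).primesBelow, log p / p) :=
        prod_primesBelow_inv_one_sub_rpow_le_mul_exp hδ hδδ₀ hδ₀ hlogp
    _ ≤ (1 + log P) * exp (c * (1 + log 8)) := by
        rw [one_div_one_div, mul_assoc]
        gcongr
    _ ≤ 2 * exp (c * (1 + log 8)) * log P := by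
        nlinarith [exp_pos (c * (1 + log 8))]

lemma mem_smoothNumbers_floor_add_one_iff {P : ℝ} (hP : 0 ≤ P) {m : ℕ} :
    m ∈ (⌊P⌋₊ + 1).smoothNumbers ↔ 1 ≤ m ∧ ∀ p ∈ m.primeFactors, (p : ℝ) ≤ P := by
  rw [Nat.mem_smoothNumbers_iff_primeFactors_subset, Nat.one_le_iff_ne_zero]
  refine and_congr_right fun _ ↦ forall₂_congr fun p hp ↦ ?_
  rw [Nat.mem_primesBelow, Nat.lt_add_one_iff, Nat.le_floor_iff hP]
  exact and_iff_left (Nat.prime_of_mem_primeFactors hp)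

theorem hasSum_smooth_tau_div_rpow {P σ : ℝ} (hP : 0 ≤ P) (hσ : 0 < σ) :
    HasSum (fun m : ℕ ↦ if 1 ≤ m ∧ ∀ p ∈ m.primeFactors, (p : ℝ) ≤ P then
        (tau m : ℝ) / (m : ℝ) ^ σ else 0)
      ((∏ p ∈ (⌊P⌋₊ + 1).primesBelow, (1 - (p : ℝ) ^ (-σ))⁻¹) ^ 2) := by
  refine ((hasSum_subtype_iff_indicator (f := fun m : ℕ ↦ (tau m : ℝ) / (m : ℝ) ^ σ)).mp
    (hasSum_tau_div_rpow_smoothNumbers hσ (⌊P⌋₊ + 1))).congr_fun fun m ↦ ?_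
  rw [Set.indicator_apply]
  exact if_congr (mem_smoothNumbers_floor_add_one_iff hP).symm rfl rfl

lemma div_le_rpow_neg_mul_div_rpow {a x R δ : ℝ} (ha : 0 ≤ a) (hR : 0 < R) (hRx : R ≤ x)
    (hδ : 0 ≤ δ) : a / x ≤ R ^ (-δ) * (a / x ^ (1 - δ)) := by
  have hx : 0 < x := hR.trans_le hRx
  calc a / x = x ^ (-δ) * (a / x ^ (1 - δ)) := by
        rw [rpow_sub hx, rpow_one, rpow_neg hx.le]
        field_simp
    _ ≤ R ^ (-δ) * (a / x ^ (1 - δ)) := by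
        gcongr ?_ * _
        exact rpow_le_rpow_of_nonpos hR hRx (neg_nonpos.mpr hδ)

lemma sum_div_le_rpow_neg_mul_tsum {s : Finset ℕ} {Q : ℕ → Prop} [DecidablePred Q] {a : ℕ → ℝ}
    {R δ : ℝ} (ha : ∀ m, 0 ≤ a m) (hR : 0 < R) (hδ : 0 ≤ δ) (hs : ∀ m ∈ s, R < m ∧ Q m)
    (hsum : Summable fun m : ℕ ↦ if Q m then a m / (m : ℝ) ^ (1 - δ) else 0) :
    ∑ m ∈ s, a m / m ≤ R ^ (-δ) * ∑' m : ℕ, if Q m then a m / (m : ℝ) ^ (1 - δ) else 0 := by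
  calc ∑ m ∈ s, a m / m
      ≤ ∑ m ∈ s, R ^ (-δ) * if Q m then a m / (m : ℝ) ^ (1 - δ) else 0 := sum_le_sum fun m hm ↦ by
        rw [if_pos (hs m hm).2]
        exact div_le_rpow_neg_mul_div_rpow (ha m) hR (hs m hm).1.le hδ
    _ ≤ R ^ (-δ) * ∑' m : ℕ, if Q m then a m / (m : ℝ) ^ (1 - δ) else 0 := by
        rw [← mul_sum]
        refine mul_le_mul_of_nonneg_left (hsum.sum_le_tsum s fun m _ ↦ ?_) (rpow_nonneg hR.le _)
        split_ifs
        exacts [div_nonneg (ha m) (rpow_nonneg (Nat.cast_nonneg m) _), le_rfl]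

theorem statement_17 :
    ∃ C : ℝ, 0 < C ∧ ∀ P R : ℝ, 3 ≤ P → P ≤ R →
      (∑ m ∈ (Finset.Icc 1 ⌊R * P⌋₊).filter
          (fun m : ℕ => R < (m : ℝ) ∧ ∀ p ∈ m.primeFactors, (p : ℝ) ≤ P),
          (tau m : ℝ) / m)
        ≤ R ^ (-(1 / Real.log P)) *
          ∑' m : ℕ, (if 1 ≤ m ∧ ∀ p ∈ m.primeFactors, (p : ℝ) ≤ P then
            (tau m : ℝ) / (m : ℝ) ^ (1 - 1 / Real.log P) else 0) ∧
      R ^ (-(1 / Real.log P)) *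
          (∑' m : ℕ, (if 1 ≤ m ∧ ∀ p ∈ m.primeFactors, (p : ℝ) ≤ P then
            (tau m : ℝ) / (m : ℝ) ^ (1 - 1 / Real.log P) else 0))
        ≤ C * R ^ (-(1 / Real.log P)) * (Real.log P) ^ 2 := by
  obtain ⟨C, hC, hprod⟩ := prod_primesBelow_inv_one_sub_rpow_le_mul_log
  refine ⟨C ^ 2, by positivity, fun P R hP hPR ↦ ?_⟩
  have hlogP := one_lt_log_of_three_le hP
  have hσ : 0 < 1 - 1 / log P := sub_pos.mpr ((div_lt_one (by linarith)).mpr hlogP)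
  have hsum := hasSum_smooth_tau_div_rpow (P := P) (by linarith) hσ
  refine ⟨?_, ?_⟩
  · refine sum_div_le_rpow_neg_mul_tsum (fun m ↦ Nat.cast_nonneg _) (by linarith) (by positivity)
      (fun m hm ↦ ?_) hsum.summable
    simp only [mem_filter, mem_Icc] at hm
    exact ⟨hm.2.1, hm.1.1, hm.2.2⟩
  · rw [hsum.tsum_eq, mul_comm (C ^ 2), mul_assoc, ← mul_pow]
    refine mul_le_mul_of_nonneg_left (pow_le_pow_left₀ ?_ (hprod P hP) 2)
      (rpow_nonneg (by linarith) _)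
    exact prod_nonneg fun p _ ↦ inv_nonneg.mpr (sub_nonneg.mpr (natCast_rpow_neg_le_one p hσ.le))
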